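/- arXiv:1801.10013 — 4 statements merged into one kernel-verified Lean document; each statement's English description precedes it below -/
import Mathlib

section
/- Let U = {(x,y,t) ∈ ℝ³ : y² − 4xt > 0} and define H(x,y,t) = (y² − 4xt)^{−1/2} on U. Then H satisfies the hyper-CR equation H_{xt} − H_{yy} + H_y H_{xx} − H_x H_{xy} = 0 on U. -/
/-!
Write `Δ = y² - 4xt` as `B(r, r) / 2` for the symmetric bilinear form `B` (`HyperCR.polar`).
Then `dΔ_q v = B(q, v)`, so `H = Δ^(-1/2)` has first derivatives `-½ Δ^(-3/2) B(q, v)` and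
Hessian `-½ Δ^(-3/2) B(v, w) + ¾ Δ^(-5/2) B(q, v) B(q, w)`. Substituting the coordinate
vectors and `Δ^(-3/2) = Δ · Δ^(-5/2)`, the hyper-CR expression becomes `Δ^(-5/2)` times a
polynomial in `x, y, t` that vanishes identically.
-/

/-- Partial derivative of `f : ℝ³ → ℝ` in direction `v`, as a function. -/
noncomputable def pd (v : ℝ × ℝ × ℝ) (f : ℝ × ℝ × ℝ → ℝ) : ℝ × ℝ × ℝ → ℝ :=
  fun q => fderiv ℝ f q v

/-- ∂/∂x for functions of (x, y, t). -/
noncomputable def px : (ℝ × ℝ × ℝ → ℝ) → ℝ × ℝ × ℝ → ℝ := pd (1, 0, 0)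
/-- ∂/∂y for functions of (x, y, t). -/
noncomputable def py : (ℝ × ℝ × ℝ → ℝ) → ℝ × ℝ × ℝ → ℝ := pd (0, 1, 0)
/-- ∂/∂t for functions of (x, y, t). -/
noncomputable def pt : (ℝ × ℝ × ℝ → ℝ) → ℝ × ℝ × ℝ → ℝ := pd (0, 0, 1)

open Filter Topology

section PartialDerivative

variable {f g : ℝ × ℝ × ℝ → ℝ} {q : ℝ × ℝ × ℝ} (v : ℝ × ℝ × ℝ)

lemma pd_congr_of_eventuallyEq (h : f =ᶠ[𝓝 q] g) : pd v f q = pd v g q := by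
  simp only [pd, h.fderiv_eq]

lemma pd_mul (hf : DifferentiableAt ℝ f q) (hg : DifferentiableAt ℝ g q) :
    pd v (fun r => f r * g r) q = pd v f q * g q + f q * pd v g q := by
  simp only [pd, fderiv_fun_mul hf hg, add_apply, smul_apply, smul_eq_mul]
  ring

lemma pd_const_mul (c : ℝ) (hf : DifferentiableAt ℝ f q) :
    pd v (fun r => c * f r) q = c * pd v f q := by
  simp only [pd, fderiv_const_mul hf, smul_apply, smul_eq_mul]

lemma pd_rpow_const (p : ℝ) (hf : DifferentiableAt ℝ f q) (hq : 0 < f q) :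
    pd v (fun r => f r ^ p) q = p * f q ^ (p - 1) * pd v f q := by
  simp only [pd, (hf.hasFDerivAt.rpow_const (p := p) (Or.inl hq.ne')).fderiv,
    smul_apply, smul_eq_mul]

end PartialDerivative

namespace HyperCR

def polar (r v : ℝ × ℝ × ℝ) : ℝ := 2 * r.2.1 * v.2.1 - 4 * (r.1 * v.2.2 + r.2.2 * v.1)

def discr (r : ℝ × ℝ × ℝ) : ℝ := r.2.1 ^ 2 - 4 * r.1 * r.2.2

noncomputable def invSqrtDiscr (r : ℝ × ℝ × ℝ) : ℝ := discr r ^ (-(1 / 2 : ℝ))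

lemma differentiable_polar_left (v : ℝ × ℝ × ℝ) : Differentiable ℝ (fun r => polar r v) := by
  unfold polar; fun_prop

lemma differentiable_discr : Differentiable ℝ discr := by
  unfold discr; fun_prop

lemma isOpen_discr_pos : IsOpen {r | 0 < discr r} :=
  isOpen_lt continuous_const differentiable_discr.continuous

lemma pd_polar_left (v w q : ℝ × ℝ × ℝ) : pd w (fun r => polar r v) q = polar w v := by
  simp (disch := fun_prop) [pd, polar, fderiv.snd, fderiv.fst, fderiv_fun_sub, fderiv_fun_mul,
    fderiv_fun_add]
  ring

lemma pd_discr (v q : ℝ × ℝ × ℝ) : pd v discr q = polar q v := by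
  unfold discr
  simp (disch := fun_prop) [pd, polar, fderiv.snd, fderiv.fst, fderiv_fun_sub,
    fderiv_fun_mul, fderiv_fun_pow]
  ring

variable {q : ℝ × ℝ × ℝ}

lemma pd_invSqrtDiscr (v : ℝ × ℝ × ℝ) (hq : 0 < discr q) :
    pd v invSqrtDiscr q = -(1 / 2) * polar q v * discr q ^ (-(3 / 2 : ℝ)) := by
  unfold invSqrtDiscr
  rw [pd_rpow_const _ _ differentiable_discr.differentiableAt hq, pd_discr]
  norm_num
  ring

lemma pd_pd_invSqrtDiscr (v w : ℝ × ℝ × ℝ) (hq : 0 < discr q) :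
    pd w (pd v invSqrtDiscr) q = -(1 / 2) * polar w v * discr q ^ (-(3 / 2 : ℝ))
      + 3 / 4 * polar q v * polar q w * discr q ^ (-(5 / 2 : ℝ)) := by
  have hfirst : pd v invSqrtDiscr =ᶠ[𝓝 q]
      fun r => (-(1 / 2) * polar r v) * discr r ^ (-(3 / 2 : ℝ)) :=
    eventually_of_mem (isOpen_discr_pos.mem_nhds hq) fun r hr => pd_invSqrtDiscr v hr
  have hdiscr := differentiable_discr.differentiableAt (x := q)
  have hpolar := differentiable_polar_left v q
  rw [pd_congr_of_eventuallyEq w hfirst,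
    pd_mul _ (hpolar.const_mul _) (hdiscr.rpow_const (Or.inl hq.ne')),
    pd_const_mul _ _ hpolar, pd_polar_left, pd_rpow_const _ _ hdiscr hq, pd_discr]
  norm_num
  ring

end HyperCR

/-- The fundamental solution `H = (y² - 4xt)^(-1/2)` satisfies the hyper-CR equation
`H_{xt} - H_{yy} + H_y H_{xx} - H_x H_{xy} = 0` on `U = {y² - 4xt > 0}`. -/
theorem stmt3 :
    let U : Set (ℝ × ℝ × ℝ) := {q | q.2.1 ^ 2 - 4 * q.1 * q.2.2 > 0}
    let H : ℝ × ℝ × ℝ → ℝ := fun q => (q.2.1 ^ 2 - 4 * q.1 * q.2.2) ^ (-(1 / 2 : ℝ))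
    ∀ q ∈ U,
      pt (px H) q - py (py H) q + py H q * px (px H) q - px H q * py (px H) q = 0 := by
  intro U H q hq
  have hH : H = HyperCR.invSqrtDiscr := rfl
  have hq' : 0 < HyperCR.discr q := hq
  simp only [px, py, pt, hH, HyperCR.pd_pd_invSqrtDiscr _ _ hq', HyperCR.pd_invSqrtDiscr _ hq']
  have hpow : HyperCR.discr q ^ (-(3 / 2 : ℝ)) =
      HyperCR.discr q * HyperCR.discr q ^ (-(5 / 2 : ℝ)) := by
    rw [← Real.rpow_one_add' hq'.le (by norm_num)]
    norm_num
  rw [hpow]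
  simp only [HyperCR.polar, HyperCR.discr]
  ring
end

section
/- Let H be a C³ function of (x,y,t) on an open set of ℝ³ and let X(p,y,t) be a C² function on an open set V ⊆ ℝ³ such that H_x(X(p,y,t),y,t) = p and H_{xx}(X(p,y,t),y,t) ≠ 0 for all (p,y,t) ∈ V. Define the Legendre transform G(p,y,t) = H(X(p,y,t),y,t) − p·X(p,y,t). If H satisfies the wave equation H_{xt} − H_{yy} = 0, then G satisfies the G-equation G_{yp}² − G_{yy} G_{pp} − G_{pt} = 0 on V. -/
/-!
Along the graph `(X(p,y,t), y, t)` the identity `H_x = p` kills the `X`-derivatives in the chain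
rule for `G`, so `G_p = -X` and `G_y = H_y`. Differentiating `H_x = p` gives
`H_xx X_p = 1`, `H_xx X_y = -H_xy`, `H_xx X_t = -H_xt`, and substituting these into
`G_yp² - G_yy G_pp - G_pt` leaves `(H_yy - H_xt) / H_xx`, which vanishes by the wave equation.
-/

lemma pd_eqOn_of_eqOn {f g : ℝ × ℝ × ℝ → ℝ} {s : Set (ℝ × ℝ × ℝ)} (hs : IsOpen s)
    (h : Set.EqOn f g s) (v : ℝ × ℝ × ℝ) : Set.EqOn (pd v f) (pd v g) s := fun _ hq => by
  simp only [pd, (Filter.eventuallyEq_of_mem (hs.mem_nhds hq) h).fderiv_eq]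

lemma pd_zero (f : ℝ × ℝ × ℝ → ℝ) (q : ℝ × ℝ × ℝ) : pd (0, 0, 0) f q = 0 :=
  map_zero _

lemma pd_neg (f : ℝ × ℝ × ℝ → ℝ) (v q : ℝ × ℝ × ℝ) : pd v (fun r => -f r) q = -pd v f q := by
  simp only [pd, fderiv_fun_neg, neg_apply]

lemma hasFDerivAt_pd {f : ℝ × ℝ × ℝ → ℝ} {z : ℝ × ℝ × ℝ} (hf : ContDiffAt ℝ 2 f z)
    (w : ℝ × ℝ × ℝ) :
    HasFDerivAt (pd w f)
      ((ContinuousLinearMap.apply ℝ ℝ w).comp (fderiv ℝ (fderiv ℝ f) z)) z :=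
  (ContinuousLinearMap.apply ℝ ℝ w).hasFDerivAt.comp z
    ((hf.fderiv_right (by norm_num)).differentiableAt one_ne_zero).hasFDerivAt

lemma pd_pd_comm {f : ℝ × ℝ × ℝ → ℝ} {z : ℝ × ℝ × ℝ} (hf : ContDiffAt ℝ 2 f z)
    (v w : ℝ × ℝ × ℝ) : pd v (pd w f) z = pd w (pd v f) z := by
  show fderiv ℝ (pd w f) z v = fderiv ℝ (pd v f) z w
  rw [(hasFDerivAt_pd hf w).fderiv, (hasFDerivAt_pd hf v).fderiv]
  exact hf.isSymmSndFDerivAt (by simp [minSmoothness_of_isRCLikeNormedField]) v w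

lemma pd_comp_graph {f X : ℝ × ℝ × ℝ → ℝ} {r : ℝ × ℝ × ℝ}
    (hf : DifferentiableAt ℝ f (X r, r.2.1, r.2.2)) (hX : DifferentiableAt ℝ X r)
    (v : ℝ × ℝ × ℝ) :
    pd v (fun s => f (X s, s.2.1, s.2.2)) r
      = pd v X r * px f (X r, r.2.1, r.2.2) + pd (0, v.2.1, v.2.2) f (X r, r.2.1, r.2.2) := by
  have hgraph : HasFDerivAt (fun s : ℝ × ℝ × ℝ => (X s, s.2.1, s.2.2))
      ((fderiv ℝ X r).prod (ContinuousLinearMap.snd ℝ ℝ (ℝ × ℝ))) r :=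
    hX.hasFDerivAt.prodMk (ContinuousLinearMap.snd ℝ ℝ (ℝ × ℝ)).hasFDerivAt
  have hsplit : ((fderiv ℝ X r).prod (ContinuousLinearMap.snd ℝ ℝ (ℝ × ℝ))) v
      = fderiv ℝ X r v • ((1 : ℝ), (0 : ℝ), (0 : ℝ)) + (0, v.2.1, v.2.2) := by
    ext <;> simp
  show fderiv ℝ (f ∘ fun s => (X s, s.2.1, s.2.2)) r v = _
  rw [(hf.hasFDerivAt.comp r hgraph).fderiv, ContinuousLinearMap.comp_apply, hsplit, map_add,
    map_smul, smul_eq_mul]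
  rfl

lemma pd_legendreTransform {H X : ℝ × ℝ × ℝ → ℝ} {r : ℝ × ℝ × ℝ}
    (hH : DifferentiableAt ℝ H (X r, r.2.1, r.2.2)) (hX : DifferentiableAt ℝ X r)
    (hleg : px H (X r, r.2.1, r.2.2) = r.1) (v : ℝ × ℝ × ℝ) :
    pd v (fun s => H (X s, s.2.1, s.2.2) - s.1 * X s) r
      = pd (0, v.2.1, v.2.2) H (X r, r.2.1, r.2.2) - v.1 * X r := by
  have hHX : DifferentiableAt ℝ (fun s => H (X s, s.2.1, s.2.2)) r :=
    hH.comp r (hX.prodMk differentiableAt_snd)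
  have hprod : HasFDerivAt (fun s : ℝ × ℝ × ℝ => s.1 * X s)
      (r.1 • fderiv ℝ X r + X r • ContinuousLinearMap.fst ℝ ℝ (ℝ × ℝ)) r :=
    (ContinuousLinearMap.fst ℝ ℝ (ℝ × ℝ)).hasFDerivAt.mul hX.hasFDerivAt
  have hcomp := pd_comp_graph hH hX v
  simp only [px, pd] at hcomp hleg ⊢
  rw [fderiv_fun_sub hHX hprod.differentiableAt, sub_apply, hcomp, hleg, hprod.fderiv]
  simp only [add_apply, FunLike.coe_smul, Pi.smul_apply,
    ContinuousLinearMap.coe_fst', smul_eq_mul]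
  ring

lemma px_legendreTransform {H X : ℝ × ℝ × ℝ → ℝ} {r : ℝ × ℝ × ℝ}
    (hH : DifferentiableAt ℝ H (X r, r.2.1, r.2.2)) (hX : DifferentiableAt ℝ X r)
    (hleg : px H (X r, r.2.1, r.2.2) = r.1) :
    px (fun s => H (X s, s.2.1, s.2.2) - s.1 * X s) r = -X r :=
  (pd_legendreTransform hH hX hleg (1, 0, 0)).trans (by simp [pd_zero])

lemma py_legendreTransform {H X : ℝ × ℝ × ℝ → ℝ} {r : ℝ × ℝ × ℝ}
    (hH : DifferentiableAt ℝ H (X r, r.2.1, r.2.2)) (hX : DifferentiableAt ℝ X r)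
    (hleg : px H (X r, r.2.1, r.2.2) = r.1) :
    py (fun s => H (X s, s.2.1, s.2.2) - s.1 * X s) r = py H (X r, r.2.1, r.2.2) :=
  (pd_legendreTransform hH hX hleg (0, 1, 0)).trans (by simp [py])

lemma pd_legendre_identity {H X : ℝ × ℝ × ℝ → ℝ} {V : Set (ℝ × ℝ × ℝ)} (hV : IsOpen V)
    (hleg : ∀ r ∈ V, px H (X r, r.2.1, r.2.2) = r.1) {q : ℝ × ℝ × ℝ} (hq : q ∈ V)
    (hH : ContDiffAt ℝ 2 H (X q, q.2.1, q.2.2)) (hX : DifferentiableAt ℝ X q)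
    (v : ℝ × ℝ × ℝ) :
    pd v X q * px (px H) (X q, q.2.1, q.2.2) + pd (0, v.2.1, v.2.2) (px H) (X q, q.2.1, q.2.2)
      = v.1 := by
  rw [← pd_comp_graph (f := px H) (hasFDerivAt_pd hH _).differentiableAt hX,
    pd_eqOn_of_eqOn hV (g := Prod.fst) hleg v hq]
  simp [pd, fderiv_fst]

lemma legendre_wave_identity {a b c A B C : ℝ} (ha : a * A = 1) (hb : b * A + B = 0)
    (hc : c * A + C = 0) : (a * B) ^ 2 - (b * B + C) * -a - -c = 0 := by
  have hA : A ≠ 0 := right_ne_zero_of_mul_eq_one ha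
  apply mul_left_cancel₀ hA
  linear_combination (a * B ^ 2 + C) * ha + a * B * hb + hc

theorem stmt5_general (O V : Set (ℝ × ℝ × ℝ)) (hO : IsOpen O) (hV : IsOpen V)
    (H X : ℝ × ℝ × ℝ → ℝ) (hH : ContDiffOn ℝ 3 H O) (hX : ContDiffOn ℝ 2 X V)
    (hmap : ∀ q ∈ V, (X q, q.2.1, q.2.2) ∈ O)
    (hleg : ∀ q ∈ V, px H (X q, q.2.1, q.2.2) = q.1)
    (hwave : ∀ z ∈ O, pt (px H) z - py (py H) z = 0) :
    let G : ℝ × ℝ × ℝ → ℝ := fun q => H (X q, q.2.1, q.2.2) - q.1 * X q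
    ∀ q ∈ V, (px (py G) q) ^ 2 - py (py G) q * px (px G) q - pt (px G) q = 0 := by
  intro G q hq
  have hXd : ∀ r ∈ V, DifferentiableAt ℝ X r := fun r hr =>
    (hX.contDiffAt (hV.mem_nhds hr)).differentiableAt (by norm_num)
  have hH2 : ∀ r ∈ V, ContDiffAt ℝ 2 H (X r, r.2.1, r.2.2) := fun r hr =>
    (hH.contDiffAt (hO.mem_nhds (hmap r hr))).of_le (by norm_num)
  have hHd : ∀ r ∈ V, DifferentiableAt ℝ H (X r, r.2.1, r.2.2) := fun r hr =>
    (hH2 r hr).differentiableAt (by norm_num)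
  have hGp : Set.EqOn (px G) (fun r => -X r) V := fun r hr =>
    px_legendreTransform (hHd r hr) (hXd r hr) (hleg r hr)
  have hGy : Set.EqOn (py G) (fun r => py H (X r, r.2.1, r.2.2)) V := fun r hr =>
    py_legendreTransform (hHd r hr) (hXd r hr) (hleg r hr)
  set z := (X q, q.2.1, q.2.2)
  have hPy : DifferentiableAt ℝ (py H) z := (hasFDerivAt_pd (hH2 q hq) _).differentiableAt
  have hGyp : px (py G) q = px X q * px (py H) z := by
    rw [← add_zero (px X q * _), ← pd_zero (py H) z]
    exact (pd_eqOn_of_eqOn hV hGy _ hq).trans (pd_comp_graph hPy (hXd q hq) _)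
  have hGyy : py (py G) q = py X q * px (py H) z + py (py H) z :=
    (pd_eqOn_of_eqOn hV hGy _ hq).trans (pd_comp_graph hPy (hXd q hq) _)
  have hGpp : px (px G) q = -px X q := (pd_eqOn_of_eqOn hV hGp _ hq).trans (pd_neg X _ q)
  have hGpt : pt (px G) q = -pt X q := (pd_eqOn_of_eqOn hV hGp _ hq).trans (pd_neg X _ q)
  have hp : px X q * px (px H) z + pd (0, 0, 0) (px H) z = 1 :=
    pd_legendre_identity hV hleg hq (hH2 q hq) (hXd q hq) (1, 0, 0)
  have hy : py X q * px (px H) z + py (px H) z = 0 :=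
    pd_legendre_identity hV hleg hq (hH2 q hq) (hXd q hq) (0, 1, 0)
  have ht : pt X q * px (px H) z + pt (px H) z = 0 :=
    pd_legendre_identity hV hleg hq (hH2 q hq) (hXd q hq) (0, 0, 1)
  rw [pd_zero, add_zero] at hp
  rw [show py (px H) z = px (py H) z from pd_pd_comm (hH2 q hq) _ _] at hy
  rw [hGyp, hGyy, hGpp, hGpt]
  exact legendre_wave_identity hp hy (by linarith [hwave z (hmap q hq)])

/-- If `H(x,y,t)` is C³ on an open set `O`, `X(p,y,t)` is C² on an open set `V` with
`H_x(X(p,y,t),y,t) = p` and `H_{xx}(X(p,y,t),y,t) ≠ 0` on `V`, and `H` satisfies the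
wave equation `H_{xt} - H_{yy} = 0`, then the Legendre transform
`G(p,y,t) = H(X(p,y,t),y,t) - p·X(p,y,t)` satisfies
`G_{yp}² - G_{yy} G_{pp} - G_{pt} = 0` on `V`. -/
theorem stmt5 (O V : Set (ℝ × ℝ × ℝ)) (hO : IsOpen O) (hV : IsOpen V)
    (H X : ℝ × ℝ × ℝ → ℝ) (hH : ContDiffOn ℝ 3 H O) (hX : ContDiffOn ℝ 2 X V)
    (hmap : ∀ q ∈ V, (X q, q.2.1, q.2.2) ∈ O)
    (hleg : ∀ q ∈ V, px H (X q, q.2.1, q.2.2) = q.1)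
    (hxx : ∀ q ∈ V, px (px H) (X q, q.2.1, q.2.2) ≠ 0)
    (hwave : ∀ z ∈ O, pt (px H) z - py (py H) z = 0) :
    let G : ℝ × ℝ × ℝ → ℝ := fun q => H (X q, q.2.1, q.2.2) - q.1 * X q
    ∀ q ∈ V, (px (py G) q) ^ 2 - py (py G) q * px (px G) q - pt (px G) q = 0 :=
  stmt5_general O V hO hV H X hH hX hmap hleg hwave
end

section
/- Let μ ∈ ℝ be a constant and let β(y,t) be a C² everywhere-positive function on an open set of ℝ² satisfying β_t + μ·β_{yy} = 0. Define, for p > 0, G(p,y,t) = μ(p·ln p − p) − μ·p·ln β(y,t). Then G satisfies the G-equation G_{yp}² − G_{yy} G_{pp} − G_{pt} = 0 at every point with p > 0. -/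
/-- Partial derivative of `f : ℝ² → ℝ` in direction `v`, as a function. -/
noncomputable def pd2 (v : ℝ × ℝ) (f : ℝ × ℝ → ℝ) : ℝ × ℝ → ℝ :=
  fun z => fderiv ℝ f z v

/-- Derivative in the first coordinate (i.e. `y` for `β(y,t)`). -/
noncomputable def p1 : (ℝ × ℝ → ℝ) → ℝ × ℝ → ℝ := pd2 (1, 0)
/-- Derivative in the second coordinate (i.e. `t`). -/
noncomputable def p2 : (ℝ × ℝ → ℝ) → ℝ × ℝ → ℝ := pd2 (0, 1)

open Filter Topology

theorem Filter.EventuallyEq.pd_eq {F G : ℝ × ℝ × ℝ → ℝ} {r : ℝ × ℝ × ℝ} (h : F =ᶠ[𝓝 r] G)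
    (v : ℝ × ℝ × ℝ) : pd v F r = pd v G r := by
  simp only [pd, h.fderiv_eq]

theorem Filter.EventuallyEq.pd2_eq {f g : ℝ × ℝ → ℝ} {z : ℝ × ℝ} (h : f =ᶠ[𝓝 z] g)
    (v : ℝ × ℝ) : pd2 v f z = pd2 v g z := by
  simp only [pd2, h.fderiv_eq]

theorem pd_add_mul {f g : ℝ → ℝ} {f' g' : ℝ} {h : ℝ × ℝ → ℝ} {r : ℝ × ℝ × ℝ}
    (hf : HasDerivAt f f' r.1) (hg : HasDerivAt g g' r.1) (hh : DifferentiableAt ℝ h r.2)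
    (v : ℝ × ℝ × ℝ) :
    pd v (fun q => f q.1 + g q.1 * h q.2) r = (f' + g' * h r.2) * v.1 + g r.1 * pd2 v.2 h r.2 := by
  have hd : HasFDerivAt (fun q : ℝ × ℝ × ℝ => f q.1 + g q.1 * h q.2) _ r :=
    (hf.comp_hasFDerivAt r hasFDerivAt_fst).add
      ((hg.comp_hasFDerivAt r hasFDerivAt_fst).mul (hh.hasFDerivAt.comp r hasFDerivAt_snd))
  simp only [pd, pd2, hd.fderiv, add_apply, smul_apply, smul_eq_mul, Function.comp_apply,
    ContinuousLinearMap.comp_apply, ContinuousLinearMap.coe_fst', ContinuousLinearMap.coe_snd']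
  ring

theorem ContDiffAt.differentiableAt_pd2 {f : ℝ × ℝ → ℝ} {z : ℝ × ℝ} (hf : ContDiffAt ℝ 2 f z)
    (v : ℝ × ℝ) : DifferentiableAt ℝ (pd2 v f) z :=
  ((hf.fderiv_right (m := 1) (by norm_num)).clm_apply contDiffAt_const).differentiableAt
    (by norm_num)

theorem pd2_log {f : ℝ × ℝ → ℝ} {z : ℝ × ℝ} (hf : DifferentiableAt ℝ f z) (hz : f z ≠ 0)
    (v : ℝ × ℝ) : pd2 v (fun w => Real.log (f w)) z = pd2 v f z / f z := by
  simp only [pd2, (hf.hasFDerivAt.log hz).fderiv, smul_apply, smul_eq_mul]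
  field_simp

theorem pd2_div {a b : ℝ × ℝ → ℝ} {z : ℝ × ℝ} (ha : DifferentiableAt ℝ a z)
    (hb : DifferentiableAt ℝ b z) (hz : b z ≠ 0) (v : ℝ × ℝ) :
    pd2 v (fun w => a w / b w) z = (pd2 v a z * b z - a z * pd2 v b z) / b z ^ 2 := by
  have hd : HasFDerivAt (fun w => a w * (b w)⁻¹) _ z :=
    ha.hasFDerivAt.mul ((hasDerivAt_inv hz).comp_hasFDerivAt z hb.hasFDerivAt)
  simp only [pd2, div_eq_mul_inv, hd.fderiv, neg_smul, smul_neg, add_apply, neg_apply, smul_apply,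
    smul_eq_mul]
  field_simp
  ring

theorem coleHopf_identity {S : Set (ℝ × ℝ)} (hS : IsOpen S) {β : ℝ × ℝ → ℝ}
    (hβ : ContDiffOn ℝ 2 β S) (hne : ∀ z ∈ S, β z ≠ 0) (μ : ℝ) {z : ℝ × ℝ} (hz : z ∈ S) :
    let L := fun w => Real.log (β w)
    p2 L z + μ * (p1 L z ^ 2 + p1 (p1 L) z) = (p2 β z + μ * p1 (p1 β) z) / β z := by
  intro L
  have hβd : ∀ w ∈ S, DifferentiableAt ℝ β w := fun w hw =>
    (hβ.contDiffAt (hS.mem_nhds hw)).differentiableAt (by norm_num)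
  have hp1L : p1 L =ᶠ[𝓝 z] fun w => p1 β w / β w :=
    eventually_of_mem (hS.mem_nhds hz) fun w hw => pd2_log (hβd w hw) (hne w hw) _
  have hp2L : p2 L z = p2 β z / β z := pd2_log (hβd z hz) (hne z hz) _
  have hp1p1L : p1 (p1 L) z = (p1 (p1 β) z * β z - p1 β z * p1 β z) / β z ^ 2 :=
    (hp1L.pd2_eq _).trans <| pd2_div ((hβ.contDiffAt (hS.mem_nhds hz)).differentiableAt_pd2 _)
      (hβd z hz) (hne z hz) _
  rw [hp1p1L, hp1L.eq_of_nhds, hp2L]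
  have hβz := hne z hz
  field_simp
  ring

section ClassA

variable {S : Set (ℝ × ℝ)} {L : ℝ × ℝ → ℝ} {μ : ℝ} {G : ℝ × ℝ × ℝ → ℝ}
  (hG : ∀ r, G r = μ * (r.1 * Real.log r.1 - r.1) - μ * r.1 * L r.2)
include hG

theorem pd_classA {q : ℝ × ℝ × ℝ} (hq : 0 < q.1) (hL : DifferentiableAt ℝ L q.2)
    (v : ℝ × ℝ × ℝ) :
    pd v G q = μ * (Real.log q.1 - L q.2) * v.1 - μ * q.1 * pd2 v.2 L q.2 := by
  have hG' : G = fun q => μ * (q.1 * Real.log q.1 - q.1) + -μ * q.1 * L q.2 := by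
    ext q; rw [hG]; ring
  rw [hG', pd_add_mul (f := fun s => μ * (s * Real.log s - s)) (g := fun s => -μ * s)
    (((Real.hasDerivAt_mul_log hq.ne').sub (hasDerivAt_id' _)).const_mul μ)
    ((hasDerivAt_id' _).const_mul (-μ)) hL]
  ring

variable (hS : IsOpen S) (hL : ContDiffOn ℝ 2 L S) {r : ℝ × ℝ × ℝ} (hr : 0 < r.1) (hrS : r.2 ∈ S)
include hS hL hr hrS

theorem eventually_pd_classA :
    ∀ᶠ q in 𝓝 r, ∀ v, pd v G q = μ * (Real.log q.1 - L q.2) * v.1 - μ * q.1 * pd2 v.2 L q.2 := by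
  have hU : {q : ℝ × ℝ × ℝ | 0 < q.1 ∧ q.2 ∈ S} ∈ 𝓝 r :=
    ((isOpen_Ioi.preimage continuous_fst).inter (hS.preimage continuous_snd)).mem_nhds ⟨hr, hrS⟩
  filter_upwards [hU] with q ⟨hq, hqS⟩
  exact pd_classA hG hq ((hL.contDiffAt (hS.mem_nhds hqS)).differentiableAt (by norm_num))

theorem gEquation_eq_classA :
    px (py G) r ^ 2 - py (py G) r * px (px G) r - pt (px G) r =
      μ * (p2 L r.2 + μ * (p1 L r.2 ^ 2 + p1 (p1 L) r.2)) := by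
  have hLr : ContDiffAt ℝ 2 L r.2 := hL.contDiffAt (hS.mem_nhds hrS)
  have hpxG : px G =ᶠ[𝓝 r] fun q => μ * Real.log q.1 + -μ * L q.2 := by
    filter_upwards [eventually_pd_classA hG hS hL hr hrS] with q hq
    rw [px, hq]
    simp only [mul_one, pd2, Prod.mk_zero_zero, map_zero, mul_zero, sub_zero, neg_mul]
    ring
  have hpyG : py G =ᶠ[𝓝 r] fun q => 0 + -μ * q.1 * p1 L q.2 := by
    filter_upwards [eventually_pd_classA hG hS hL hr hrS] with q hq
    rw [py, hq]
    simp [pd2, p1]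
  have hpxd := pd_add_mul (r := r) ((Real.hasDerivAt_log hr.ne').const_mul μ)
    (hasDerivAt_const _ (-μ)) (hLr.differentiableAt (by norm_num))
  have hpyd := pd_add_mul (r := r) (h := p1 L) (hasDerivAt_const _ 0)
    ((hasDerivAt_id' _).const_mul (-μ)) (hLr.differentiableAt_pd2 _)
  have hpxpx : px (px G) r = μ / r.1 := by
    refine (hpxG.pd_eq _).trans ((hpxd _).trans ?_)
    simp only [zero_mul, add_zero, mul_one, pd2, Prod.mk_zero_zero, map_zero, mul_zero]
    field_simp
  have hptpx : pt (px G) r = -μ * p2 L r.2 := by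
    refine (hpxG.pd_eq _).trans ((hpxd _).trans ?_)
    simp [pd2, p2]
  have hpxpy : px (py G) r = -μ * p1 L r.2 := by
    refine (hpyG.pd_eq _).trans ((hpyd _).trans ?_)
    simp [pd2, p1, Prod.mk_zero_zero]
  have hpypy : py (py G) r = -μ * r.1 * p1 (p1 L) r.2 := by
    refine (hpyG.pd_eq _).trans ((hpyd _).trans ?_)
    simp [pd2, p1]
  rw [hpxpx, hptpx, hpxpy, hpypy]
  field_simp
  ring

end ClassA

/-- Verification of the Class A solutions: if `β(y,t)` is C², positive, and satisfies
`β_t + μ β_{yy} = 0` on an open set `S ⊆ ℝ²`, then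
`G(p,y,t) = μ(p ln p - p) - μ p ln β(y,t)` satisfies the G-equation
`G_{yp}² - G_{yy} G_{pp} - G_{pt} = 0` at every point with `p > 0`, `(y,t) ∈ S`. -/
theorem stmt11 (S : Set (ℝ × ℝ)) (hS : IsOpen S) (μ : ℝ) (β : ℝ × ℝ → ℝ)
    (hβ : ContDiffOn ℝ 2 β S) (hpos : ∀ z ∈ S, 0 < β z)
    (hheat : ∀ z ∈ S, p2 β z + μ * p1 (p1 β) z = 0) :
    let G : ℝ × ℝ × ℝ → ℝ := fun r =>
      μ * (r.1 * Real.log r.1 - r.1) - μ * r.1 * Real.log (β (r.2.1, r.2.2))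
    ∀ p > (0 : ℝ), ∀ z ∈ S,
      (px (py G) (p, z.1, z.2)) ^ 2 - py (py G) (p, z.1, z.2) * px (px G) (p, z.1, z.2)
        - pt (px G) (p, z.1, z.2) = 0 := by
  intro G p hp z hz
  have hne : ∀ z ∈ S, β z ≠ 0 := fun z hz => (hpos z hz).ne'
  rw [gEquation_eq_classA (G := G) (r := (p, z)) (fun _ => rfl) hS (hβ.log hne) hp hz,
    coleHopf_identity hS hβ hne μ hz, hheat z hz, zero_div, mul_zero]
end

section
/- Let K ⊆ ℝ be an open interval, let A : (0,∞) × K → ℝ be C², and let c₁, c₂, c₃ : K → ℝ be differentiable. Suppose G(p,y,t) = A(p,t) + p·(c₁(t)y² + c₂(t)y + c₃(t)) satisfies the G-equation G_{yp}² − G_{yy} G_{pp} − G_{pt} = 0 for all p ∈ (0,∞), y ∈ ℝ, t ∈ K. Then c₁'(t) = 4·c₁(t)² for all t ∈ K. -/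
/-
With `B = c₁ y² + c₂ y + c₃` we have `G_y = p B_y` and `G_p = A_p + B`, so the G-equation reads
`B_y² - 2 p c₁ A_pp - A_pt - B_t = 0`. This is a polynomial identity in `y`, and its
`y²`-coefficient is `4 c₁² - c₁'`.
-/

open Set Filter Topology ContinuousLinearMap

def quadInY (F : ℝ × ℝ → ℝ) (w a b c : ℝ → ℝ) (r : ℝ × ℝ × ℝ) : ℝ :=
  F (r.1, r.2.2) + w r.1 * (a r.2.2 * r.2.1 ^ 2 + b r.2.2 * r.2.1 + c r.2.2)

theorem pd_quadInY {F : ℝ × ℝ → ℝ} {w a b c : ℝ → ℝ} {F' : ℝ × ℝ →L[ℝ] ℝ} {w' a' b' c' p y t : ℝ}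
    (hF : HasFDerivAt F F' (p, t)) (hw : HasDerivAt w w' p) (ha : HasDerivAt a a' t)
    (hb : HasDerivAt b b' t) (hc : HasDerivAt c c' t) (v : ℝ × ℝ × ℝ) :
    pd v (quadInY F w a b c) (p, y, t) =
      F' (v.1, v.2.2) + w' * v.1 * (a t * y ^ 2 + b t * y + c t)
        + w p * ((a' * y ^ 2 + b' * y + c') * v.2.2 + (2 * a t * y + b t) * v.2.1) := by
  have hp : HasFDerivAt (fun r : ℝ × ℝ × ℝ => r.1) (fst ℝ ℝ (ℝ × ℝ)) (p, y, t) := hasFDerivAt_fst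
  have hy : HasFDerivAt (fun r : ℝ × ℝ × ℝ => r.2.1) ((fst ℝ ℝ ℝ).comp (snd ℝ ℝ (ℝ × ℝ)))
      (p, y, t) := hasFDerivAt_snd.fst
  have ht : HasFDerivAt (fun r : ℝ × ℝ × ℝ => r.2.2) ((snd ℝ ℝ ℝ).comp (snd ℝ ℝ (ℝ × ℝ)))
      (p, y, t) := hasFDerivAt_snd.snd
  have hB := ((ha.comp_hasFDerivAt _ ht).mul (hy.pow 2)).add ((hb.comp_hasFDerivAt _ ht).mul hy)
    |>.add (hc.comp_hasFDerivAt _ ht)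
  have hG : HasFDerivAt (quadInY F w a b c) _ (p, y, t) :=
    (hF.comp (p, y, t) (hp.prodMk ht)).add ((hw.comp_hasFDerivAt _ hp).mul hB)
  rw [pd, hG.fderiv]
  simp only [Function.comp_apply, Nat.add_one_sub_one, pow_one, nsmul_eq_mul, Nat.cast_ofNat,
    smul_add, add_apply, comp_apply, ContinuousLinearMap.prod_apply, coe_fst', coe_snd',
    smul_apply, smul_eq_mul]
  ring

noncomputable def gOperator (G : ℝ × ℝ × ℝ → ℝ) (q : ℝ × ℝ × ℝ) : ℝ :=
  px (py G) q ^ 2 - py (py G) q * px (px G) q - pt (px G) q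

section Partials

variable {F : ℝ × ℝ → ℝ} {w a b c : ℝ → ℝ} {p y t : ℝ}

theorem px_quadInY (hF : DifferentiableAt ℝ F (p, t)) (hw : DifferentiableAt ℝ w p)
    (ha : DifferentiableAt ℝ a t) (hb : DifferentiableAt ℝ b t) (hc : DifferentiableAt ℝ c t) :
    px (quadInY F w a b c) (p, y, t) =
      quadInY (fun z => fderiv ℝ F z (1, 0)) (deriv w) a b c (p, y, t) := by
  rw [px, pd_quadInY hF.hasFDerivAt hw.hasDerivAt ha.hasDerivAt hb.hasDerivAt hc.hasDerivAt,
    quadInY]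
  ring

theorem py_quadInY (hF : DifferentiableAt ℝ F (p, t)) (hw : DifferentiableAt ℝ w p)
    (ha : DifferentiableAt ℝ a t) (hb : DifferentiableAt ℝ b t) (hc : DifferentiableAt ℝ c t) :
    py (quadInY F w a b c) (p, y, t) =
      quadInY (fun _ => 0) w (fun _ => 0) (fun t => 2 * a t) b (p, y, t) := by
  rw [py, pd_quadInY hF.hasFDerivAt hw.hasDerivAt ha.hasDerivAt hb.hasDerivAt hc.hasDerivAt,
    quadInY]
  simp only [Prod.mk_zero_zero, map_zero]
  ring

theorem pt_quadInY (hF : DifferentiableAt ℝ F (p, t)) (hw : DifferentiableAt ℝ w p)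
    (ha : DifferentiableAt ℝ a t) (hb : DifferentiableAt ℝ b t) (hc : DifferentiableAt ℝ c t) :
    pt (quadInY F w a b c) (p, y, t) =
      fderiv ℝ F (p, t) (0, 1) + w p * (deriv a t * y ^ 2 + deriv b t * y + deriv c t) := by
  rw [pt, pd_quadInY hF.hasFDerivAt hw.hasDerivAt ha.hasDerivAt hb.hasDerivAt hc.hasDerivAt]
  ring

end Partials

theorem Filter.EventuallyEq.pd_eq_s13 {f g : ℝ × ℝ × ℝ → ℝ} {q : ℝ × ℝ × ℝ} (h : f =ᶠ[𝓝 q] g)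
    (v : ℝ × ℝ × ℝ) : pd v f q = pd v g q := by
  simp only [pd, h.fderiv_eq]

theorem ContDiffAt.differentiableAt_fderiv_apply {E F : Type*} [NormedAddCommGroup E]
    [NormedSpace ℝ E] [NormedAddCommGroup F] [NormedSpace ℝ F] {f : E → F} {z : E}
    (hf : ContDiffAt ℝ 2 f z) (v : E) : DifferentiableAt ℝ (fun z => fderiv ℝ f z v) z :=
  ((hf.fderiv_right (m := 1) le_rfl).differentiableAt one_ne_zero).clm_apply
    (differentiableAt_const v)

section GEquation

variable {K : Set ℝ} {A : ℝ × ℝ → ℝ} {c₁ c₂ c₃ : ℝ → ℝ} {p y t : ℝ}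

theorem py_quadInY_eventuallyEq (hK : IsOpen K) (hA : ∀ z ∈ Ioi 0 ×ˢ K, DifferentiableAt ℝ A z)
    (hc₁ : ∀ t ∈ K, DifferentiableAt ℝ c₁ t) (hc₂ : ∀ t ∈ K, DifferentiableAt ℝ c₂ t)
    (hc₃ : ∀ t ∈ K, DifferentiableAt ℝ c₃ t) (hp : 0 < p) (ht : t ∈ K) :
    py (quadInY A (fun p => p) c₁ c₂ c₃) =ᶠ[𝓝 (p, y, t)]
      quadInY (fun _ => 0) (fun p => p) (fun _ => 0) (fun t => 2 * c₁ t) c₂ := by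
  filter_upwards [(isOpen_Ioi.prod (isOpen_univ.prod hK)).mem_nhds ⟨hp, trivial, ht⟩]
  rintro ⟨p', y', t'⟩ ⟨hp', -, ht'⟩
  exact py_quadInY (hA _ ⟨hp', ht'⟩) differentiableAt_fun_id (hc₁ t' ht') (hc₂ t' ht') (hc₃ t' ht')

theorem px_quadInY_eventuallyEq (hK : IsOpen K) (hA : ∀ z ∈ Ioi 0 ×ˢ K, DifferentiableAt ℝ A z)
    (hc₁ : ∀ t ∈ K, DifferentiableAt ℝ c₁ t) (hc₂ : ∀ t ∈ K, DifferentiableAt ℝ c₂ t)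
    (hc₃ : ∀ t ∈ K, DifferentiableAt ℝ c₃ t) (hp : 0 < p) (ht : t ∈ K) :
    px (quadInY A (fun p => p) c₁ c₂ c₃) =ᶠ[𝓝 (p, y, t)]
      quadInY (fun z => fderiv ℝ A z (1, 0)) (fun _ => 1) c₁ c₂ c₃ := by
  filter_upwards [(isOpen_Ioi.prod (isOpen_univ.prod hK)).mem_nhds ⟨hp, trivial, ht⟩]
  rintro ⟨p', y', t'⟩ ⟨hp', -, ht'⟩
  rw [px_quadInY (hA _ ⟨hp', ht'⟩) differentiableAt_fun_id (hc₁ t' ht') (hc₂ t' ht') (hc₃ t' ht'),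
    deriv_id'']

theorem gOperator_quadInY (hK : IsOpen K) (hA : ∀ z ∈ Ioi 0 ×ˢ K, ContDiffAt ℝ 2 A z)
    (hc₁ : ∀ t ∈ K, DifferentiableAt ℝ c₁ t) (hc₂ : ∀ t ∈ K, DifferentiableAt ℝ c₂ t)
    (hc₃ : ∀ t ∈ K, DifferentiableAt ℝ c₃ t) (hp : 0 < p) (ht : t ∈ K) :
    gOperator (quadInY A (fun p => p) c₁ c₂ c₃) (p, y, t) =
      (2 * c₁ t * y + c₂ t) ^ 2
        - 2 * p * c₁ t * fderiv ℝ (fun z => fderiv ℝ A z (1, 0)) (p, t) (1, 0)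
        - (fderiv ℝ (fun z => fderiv ℝ A z (1, 0)) (p, t) (0, 1)
          + (deriv c₁ t * y ^ 2 + deriv c₂ t * y + deriv c₃ t)) := by
  have hA₁ z hz : DifferentiableAt ℝ A z := (hA z hz).differentiableAt (by norm_num)
  have hpy := py_quadInY_eventuallyEq (y := y) hK hA₁ hc₁ hc₂ hc₃ hp ht
  have hpx := px_quadInY_eventuallyEq (y := y) hK hA₁ hc₁ hc₂ hc₃ hp ht
  have h2c₁ := (hc₁ t ht).const_mul 2
  have hAp := (hA (p, t) ⟨hp, ht⟩).differentiableAt_fderiv_apply (1, 0)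
  have hpxpy : px (py (quadInY A (fun p => p) c₁ c₂ c₃)) (p, y, t) = 2 * c₁ t * y + c₂ t :=
    (hpy.pd_eq_s13 _).trans <| (px_quadInY (differentiableAt_const _) differentiableAt_fun_id
      (differentiableAt_const _) h2c₁ (hc₂ t ht)).trans (by simp [quadInY])
  have hpypy : py (py (quadInY A (fun p => p) c₁ c₂ c₃)) (p, y, t) = 2 * p * c₁ t :=
    (hpy.pd_eq_s13 _).trans <| (py_quadInY (differentiableAt_const _) differentiableAt_fun_id
      (differentiableAt_const _) h2c₁ (hc₂ t ht)).trans (by simp [quadInY]; ring)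
  have hpxpx : px (px (quadInY A (fun p => p) c₁ c₂ c₃)) (p, y, t) =
      fderiv ℝ (fun z => fderiv ℝ A z (1, 0)) (p, t) (1, 0) :=
    (hpx.pd_eq_s13 _).trans <| (px_quadInY hAp (differentiableAt_const _)
      (hc₁ t ht) (hc₂ t ht) (hc₃ t ht)).trans (by simp [quadInY])
  have hptpx : pt (px (quadInY A (fun p => p) c₁ c₂ c₃)) (p, y, t) =
      fderiv ℝ (fun z => fderiv ℝ A z (1, 0)) (p, t) (0, 1)
        + (deriv c₁ t * y ^ 2 + deriv c₂ t * y + deriv c₃ t) :=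
    (hpx.pd_eq_s13 _).trans <| (pt_quadInY hAp (differentiableAt_const _)
      (hc₁ t ht) (hc₂ t ht) (hc₃ t ht)).trans (by simp)
  rw [gOperator, hpxpy, hpypy, hpxpx, hptpx]

end GEquation

theorem stmt13_general (K : Set ℝ) (hKo : IsOpen K)
    (A : ℝ × ℝ → ℝ) (hA : ContDiffOn ℝ 2 A (Set.Ioi (0 : ℝ) ×ˢ K))
    (c₁ c₂ c₃ : ℝ → ℝ)
    (hc₁ : DifferentiableOn ℝ c₁ K) (hc₂ : DifferentiableOn ℝ c₂ K)
    (hc₃ : DifferentiableOn ℝ c₃ K)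
    (hG : ∀ p > (0 : ℝ), ∀ y : ℝ, ∀ t ∈ K,
      let G : ℝ × ℝ × ℝ → ℝ := fun r =>
        A (r.1, r.2.2) + r.1 * (c₁ r.2.2 * r.2.1 ^ 2 + c₂ r.2.2 * r.2.1 + c₃ r.2.2)
      (px (py G) (p, y, t)) ^ 2 - py (py G) (p, y, t) * px (px G) (p, y, t)
        - pt (px G) (p, y, t) = 0) :
    ∀ t ∈ K, deriv c₁ t = 4 * (c₁ t) ^ 2 := by
  intro t ht
  have hA' : ∀ z ∈ Ioi 0 ×ˢ K, ContDiffAt ℝ 2 A z := fun z hz =>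
    hA.contDiffAt ((isOpen_Ioi.prod hKo).mem_nhds hz)
  have hK {c : ℝ → ℝ} (hc : DifferentiableOn ℝ c K) : ∀ s ∈ K, DifferentiableAt ℝ c s :=
    fun s hs => hc.differentiableAt (hKo.mem_nhds hs)
  have hGt (y : ℝ) :=
    (gOperator_quadInY (y := y) hKo hA' (hK hc₁) (hK hc₂) (hK hc₃) one_pos ht).symm.trans
      (hG 1 one_pos y t ht)
  -- the second difference in `y` isolates the `y²`-coefficient `4 c₁² - c₁'`
  linear_combination (-1 / 2 : ℝ) * (hGt 1 + hGt (-1) - 2 * hGt 0)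

/-- The `B_{yyy} = 0` branch: if `A(p,t)` is C² on `(0,∞) × K` (`K` an open interval),
`c₁, c₂, c₃` are differentiable on `K`, and
`G(p,y,t) = A(p,t) + p(c₁(t)y² + c₂(t)y + c₃(t))` satisfies the G-equation
`G_{yp}² - G_{yy} G_{pp} - G_{pt} = 0` for all `p > 0`, `y ∈ ℝ`, `t ∈ K`, then
`c₁' = 4 c₁²` on `K`. -/
theorem stmt13 (K : Set ℝ) (hKo : IsOpen K) (hKc : K.OrdConnected)
    (A : ℝ × ℝ → ℝ) (hA : ContDiffOn ℝ 2 A (Set.Ioi (0 : ℝ) ×ˢ K))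
    (c₁ c₂ c₃ : ℝ → ℝ)
    (hc₁ : DifferentiableOn ℝ c₁ K) (hc₂ : DifferentiableOn ℝ c₂ K)
    (hc₃ : DifferentiableOn ℝ c₃ K)
    (hG : ∀ p > (0 : ℝ), ∀ y : ℝ, ∀ t ∈ K,
      let G : ℝ × ℝ × ℝ → ℝ := fun r =>
        A (r.1, r.2.2) + r.1 * (c₁ r.2.2 * r.2.1 ^ 2 + c₂ r.2.2 * r.2.1 + c₃ r.2.2)
      (px (py G) (p, y, t)) ^ 2 - py (py G) (p, y, t) * px (px G) (p, y, t)
        - pt (px G) (p, y, t) = 0) :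
    ∀ t ∈ K, deriv c₁ t = 4 * (c₁ t) ^ 2 :=
  stmt13_general K hKo A hA c₁ c₂ c₃ hc₁ hc₂ hc₃ hG
end
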